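/- Fix r₁ ∈ ℝ, θ ∈ (0, π), ω_0 ≥ 0 and w_∞ ∈ ℝ with ω_0² − w_∞² > 0, and let a, b, c, w : (r₁, ∞) → ℝ. Assume: a(r) ≠ 0, b(r)² − a(r) c(r) > 0 and ω_0² + w(r)² a(r) ≥ 0 for all r; and as r → ∞: a(r) → −1, b(r)/(r sin θ) → 0, (b(r)² − a(r) c(r))/(r² sin² θ) → 1, and w(r)² → w_∞². Define R_±(r) = ±(b(r)/a(r)) ω_0 + (1/a(r)) √(b(r)² − a(r) c(r)) √(ω_0² + w(r)² a(r)). Then, as r → ∞, R_±(r)/r → −sin θ · √(ω_0² − w_∞²) and R_±(r) → −∞ (for both choices of sign). -/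

import Mathlib

open Real Filter Topology Set

/-!
Dividing by the cylindrical radius `ρ = r sin θ` turns `R_±` into
`±ω₀ (b/ρ)/a + (1/a) √((b² − a c)/ρ²) √(ω₀² + w² a)`, whose terms have limits
`0` and `−√(ω₀² − w_∞²)` at an asymptotically flat end. So `R_± / r` tends to the negative
number `−sin θ √(ω₀² − w_∞²)`, which forces `R_± → −∞`.
-/

/-- The potential `R_±`, with the sign `±` carried by `s`. -/
noncomputable def potential (s ω0 a b c w : ℝ) : ℝ :=
  s * (b / a) * ω0 + (1 / a) * √(b ^ 2 - a * c) * √(ω0 ^ 2 + w ^ 2 * a)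

lemma potential_div_of_pos (s ω0 a b c w : ℝ) {ρ : ℝ} (hρ : 0 < ρ) :
    potential s ω0 a b c w / ρ =
      s * (b / ρ / a) * ω0 + (1 / a) * √((b ^ 2 - a * c) / ρ ^ 2) * √(ω0 ^ 2 + w ^ 2 * a) := by
  rw [potential, sqrt_div' _ (sq_nonneg ρ), sqrt_sq hρ.le]
  field_simp

lemma tendsto_potential_div {α : Type*} {l : Filter α} (s ω0 wi : ℝ) {a b c w ρ : α → ℝ}
    (hρ : ∀ᶠ x in l, 0 < ρ x)
    (ha : Tendsto a l (𝓝 (-1)))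
    (hb : Tendsto (fun x => b x / ρ x) l (𝓝 0))
    (hdet : Tendsto (fun x => (b x ^ 2 - a x * c x) / ρ x ^ 2) l (𝓝 1))
    (hw : Tendsto (fun x => w x ^ 2) l (𝓝 (wi ^ 2))) :
    Tendsto (fun x => potential s ω0 (a x) (b x) (c x) (w x) / ρ x) l
      (𝓝 (-√(ω0 ^ 2 - wi ^ 2))) := by
  have hainv : Tendsto (fun x => 1 / a x) l (𝓝 (-1)) := by
    simpa using ha.inv₀ (by norm_num)
  have hshift : Tendsto (fun x => s * (b x / ρ x / a x) * ω0) l (𝓝 0) := by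
    simpa using ((hb.div ha (by norm_num)).const_mul s).mul_const ω0
  have hX : Tendsto (fun x => ω0 ^ 2 + w x ^ 2 * a x) l (𝓝 (ω0 ^ 2 - wi ^ 2)) := by
    simpa [sub_eq_add_neg] using (hw.mul ha).const_add (ω0 ^ 2)
  have hmain : Tendsto (fun x => 1 / a x * √((b x ^ 2 - a x * c x) / ρ x ^ 2) *
      √(ω0 ^ 2 + w x ^ 2 * a x)) l (𝓝 (-√(ω0 ^ 2 - wi ^ 2))) := by
    simpa using (hainv.mul hdet.sqrt).mul hX.sqrt
  refine (by simpa using hshift.add hmain : Tendsto _ l _).congr' ?_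
  filter_upwards [hρ] with x hx
  rw [potential_div_of_pos _ _ _ _ _ _ hx, one_div]

lemma tendsto_atBot_of_tendsto_div_id {f : ℝ → ℝ} {L : ℝ} (hL : L < 0)
    (hf : Tendsto (fun r => f r / r) atTop (𝓝 L)) : Tendsto f atTop atBot := by
  refine (hf.neg_mul_atTop hL tendsto_id).congr' ?_
  filter_upwards [eventually_gt_atTop 0] with r hr
  exact div_mul_cancel₀ _ hr.ne'

lemma tendsto_potential_div_id (s θ ω0 wi : ℝ) (hθ : 0 < θ) (hθ' : θ < π) {a b c w : ℝ → ℝ}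
    (ha : Tendsto a atTop (𝓝 (-1)))
    (hb : Tendsto (fun r => b r / (r * sin θ)) atTop (𝓝 0))
    (hdet : Tendsto (fun r => (b r ^ 2 - a r * c r) / (r ^ 2 * sin θ ^ 2)) atTop (𝓝 1))
    (hw : Tendsto (fun r => w r ^ 2) atTop (𝓝 (wi ^ 2))) :
    Tendsto (fun r => potential s ω0 (a r) (b r) (c r) (w r) / r) atTop
      (𝓝 (-(sin θ * √(ω0 ^ 2 - wi ^ 2)))) := by
  have hsin : 0 < sin θ := sin_pos_of_pos_of_lt_pi hθ hθ'
  have hρ : ∀ᶠ r in atTop, 0 < r * sin θ := by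
    filter_upwards [eventually_gt_atTop 0] with r hr
    positivity
  have hdet' : Tendsto (fun r => (b r ^ 2 - a r * c r) / (r * sin θ) ^ 2) atTop (𝓝 1) := by
    simpa only [mul_pow] using hdet
  have hcyl := (tendsto_potential_div s ω0 wi hρ ha hb hdet' hw).const_mul (sin θ)
  rw [mul_neg] at hcyl
  refine hcyl.congr' ?_
  filter_upwards [hρ] with r hr
  field_simp [hsin.ne', (pos_of_mul_pos_left hr hsin.le).ne']

theorem stmt13_general (θ ω0 wi : ℝ) (hθ : 0 < θ) (hθ' : θ < π)
    (hgap : 0 < ω0 ^ 2 - wi ^ 2)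
    (a b c w : ℝ → ℝ)
    (ha : Tendsto a atTop (𝓝 (-1)))
    (hb : Tendsto (fun r => b r / (r * Real.sin θ)) atTop (𝓝 0))
    (hdet : Tendsto (fun r => (b r ^ 2 - a r * c r) / (r ^ 2 * Real.sin θ ^ 2))
      atTop (𝓝 1))
    (hw : Tendsto (fun r => w r ^ 2) atTop (𝓝 (wi ^ 2)))
    (Rp Rm : ℝ → ℝ)
    (hRp : ∀ r, Rp r = (b r / a r) * ω0 +
      (1 / a r) * Real.sqrt (b r ^ 2 - a r * c r) * Real.sqrt (ω0 ^ 2 + w r ^ 2 * a r))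
    (hRm : ∀ r, Rm r = -(b r / a r) * ω0 +
      (1 / a r) * Real.sqrt (b r ^ 2 - a r * c r) * Real.sqrt (ω0 ^ 2 + w r ^ 2 * a r)) :
    Tendsto (fun r => Rp r / r) atTop (𝓝 (-(Real.sin θ * Real.sqrt (ω0 ^ 2 - wi ^ 2)))) ∧
    Tendsto (fun r => Rm r / r) atTop (𝓝 (-(Real.sin θ * Real.sqrt (ω0 ^ 2 - wi ^ 2)))) ∧
    Tendsto Rp atTop atBot ∧ Tendsto Rm atTop atBot := by
  have hRp' : Rp = fun r => potential 1 ω0 (a r) (b r) (c r) (w r) := by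
    funext r; rw [hRp, potential, one_mul]
  have hRm' : Rm = fun r => potential (-1) ω0 (a r) (b r) (c r) (w r) := by
    funext r; rw [hRm, potential, neg_one_mul]
  have hneg : -(sin θ * √(ω0 ^ 2 - wi ^ 2)) < 0 :=
    neg_neg_of_pos (mul_pos (sin_pos_of_pos_of_lt_pi hθ hθ') (sqrt_pos.mpr hgap))
  have hp := tendsto_potential_div_id 1 θ ω0 wi hθ hθ' ha hb hdet hw
  have hm := tendsto_potential_div_id (-1) θ ω0 wi hθ hθ' ha hb hdet hw
  subst hRp' hRm'
  exact ⟨hp, hm, tendsto_atBot_of_tendsto_div_id hneg hp,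
    tendsto_atBot_of_tendsto_div_id hneg hm⟩

/-- At an asymptotically flat end (`a → −1`, `b/(r sin θ) → 0`,
`(b² − a c)/(r² sin² θ) → 1`, `w² → w_∞²`), one has `R_±/r → −sin θ √(ω₀² − w_∞²)`
and `R_± → −∞` as `r → ∞`. -/
theorem stmt13 (r₁ θ ω0 wi : ℝ) (hθ : 0 < θ) (hθ' : θ < π) (hω0 : 0 ≤ ω0)
    (hgap : 0 < ω0 ^ 2 - wi ^ 2)
    (a b c w : ℝ → ℝ)
    (hcond : ∀ r > r₁,
      a r ≠ 0 ∧ 0 < b r ^ 2 - a r * c r ∧ 0 ≤ ω0 ^ 2 + w r ^ 2 * a r)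
    (ha : Tendsto a atTop (𝓝 (-1)))
    (hb : Tendsto (fun r => b r / (r * Real.sin θ)) atTop (𝓝 0))
    (hdet : Tendsto (fun r => (b r ^ 2 - a r * c r) / (r ^ 2 * Real.sin θ ^ 2))
      atTop (𝓝 1))
    (hw : Tendsto (fun r => w r ^ 2) atTop (𝓝 (wi ^ 2)))
    (Rp Rm : ℝ → ℝ)
    (hRp : ∀ r, Rp r = (b r / a r) * ω0 +
      (1 / a r) * Real.sqrt (b r ^ 2 - a r * c r) * Real.sqrt (ω0 ^ 2 + w r ^ 2 * a r))
    (hRm : ∀ r, Rm r = -(b r / a r) * ω0 +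
      (1 / a r) * Real.sqrt (b r ^ 2 - a r * c r) * Real.sqrt (ω0 ^ 2 + w r ^ 2 * a r)) :
    Tendsto (fun r => Rp r / r) atTop (𝓝 (-(Real.sin θ * Real.sqrt (ω0 ^ 2 - wi ^ 2)))) ∧
    Tendsto (fun r => Rm r / r) atTop (𝓝 (-(Real.sin θ * Real.sqrt (ω0 ^ 2 - wi ^ 2)))) ∧
    Tendsto Rp atTop atBot ∧ Tendsto Rm atTop atBot :=
  stmt13_general θ ω0 wi hθ hθ' hgap a b c w ha hb hdet hw Rp Rm hRp hRm
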